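/- arXiv:1708.04152 — 2 statements merged into one kernel-verified Lean document; each statement's English description precedes it below -/
import Mathlib

section
/- Let u = max{u₁, u₂} where u₁, u₂ are convex functions on ℝⁿ whose subdifferential images ∂u₁(ℝⁿ) and ∂u₂(ℝⁿ) are strongly separated by a hyperplane. Then each of the sets Σ := {u₁ = u₂}, C₁ := {u₁ > u₂}, and C₂ := {u₁ < u₂} is connected: Σ is the graph of a globally Lipschitz function h over the separating hyperplane, C₁ its open epigraph, and C₂ its open subgraph. -/
/-!
Every subgradient of `u₁` has last coordinate above `a + d` and every subgradient of `u₂` has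
last coordinate below `a - d`, so `w = u₁ - u₂` increases at rate at least `2d` along each
vertical line; and `w` is globally Lipschitz because the subgradients are bounded. Hence each
vertical line over `x'` crosses `{w = 0}` exactly once, at a height `h x'`, and comparing the
growth rate `2d` with the Lipschitz constant of `w` makes `h` Lipschitz. The three sets are the
images of `ℝⁿ × {0}`, `ℝⁿ × (0, ∞)` and `ℝⁿ × (-∞, 0)` under `(x', s) ↦ (x', h x' + s)`.
-/

open Set

noncomputable section

/-- The subdifferential of `f : ℝⁿ → ℝ` at `x`. -/
def subdiff {n : ℕ} (f : EuclideanSpace ℝ (Fin n) → ℝ) (x : EuclideanSpace ℝ (Fin n)) :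
    Set (EuclideanSpace ℝ (Fin n)) :=
  {p | ∀ y, f x + inner ℝ p (y - x) ≤ f y}

/-- Append a last coordinate `t` to `x' ∈ ℝⁿ`, giving a point of `ℝⁿ⁺¹`. -/
def snocPt {n : ℕ} (x' : EuclideanSpace ℝ (Fin n)) (t : ℝ) :
    EuclideanSpace ℝ (Fin (n + 1)) :=
  (EuclideanSpace.equiv (Fin (n + 1)) ℝ).symm (Fin.snoc (fun i => x' i) t)

/-- Projection onto the first `n` coordinates. -/
def projPt {n : ℕ} (x : EuclideanSpace ℝ (Fin (n + 1))) : EuclideanSpace ℝ (Fin n) :=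
  (EuclideanSpace.equiv (Fin n) ℝ).symm (fun i => x i.castSucc)

open NNReal

theorem ConvexOn.exists_subgradient {E : Type*} [NormedAddCommGroup E] [NormedSpace ℝ E]
    {f : E → ℝ} (hf : ConvexOn ℝ univ f) (hfc : Continuous f) (x : E) :
    ∃ l : StrongDual ℝ E, ∀ y, f x + l (y - x) ≤ f y := by
  have hconv : Convex ℝ {q : E × ℝ | f q.1 < q.2} := by
    simpa using hf.convex_strict_epigraph
  have hopen : IsOpen {q : E × ℝ | f q.1 < q.2} :=
    isOpen_lt (hfc.comp continuous_fst) continuous_snd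
  obtain ⟨L, hL⟩ := geometric_hahn_banach_open_point (x := (x, f x)) hconv hopen (by simp)
  set φ := L.comp (.inl ℝ E ℝ)
  set c := L (0, 1)
  have hsplit : ∀ y t, L (y, t) = φ y + t * c := fun y t => by
    have : (y, t) = (y, 0) + t • ((0 : E), (1 : ℝ)) := by simp
    rw [this, map_add, map_smul, smul_eq_mul]
    rfl
  have hstrict : ∀ y t, f y < t → φ y + t * c < φ x + f x * c := fun y t ht => by
    simpa only [hsplit] using hL (y, t) ht
  have hc : c < 0 := by linarith [hstrict x (f x + 1) (lt_add_one _)]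
  have hle : ∀ y, φ y + f y * c ≤ φ x + f x * c := fun y => by
    refine le_of_forall_pos_lt_add fun ε hε => ?_
    have hcancel : ε / -c * c = -ε := by field_simp [hc.ne]
    have := hstrict y (f y + ε / -c) (lt_add_of_pos_right _ (div_pos hε (neg_pos.2 hc)))
    linarith [add_mul (f y) (ε / -c) c]
  refine ⟨(-c)⁻¹ • φ, fun y => ?_⟩
  have hy : φ y - φ x ≤ -c * (f y - f x) := by linarith [hle y]
  have := (inv_mul_le_iff₀ (neg_pos.2 hc)).2 hy
  show f x + (-c)⁻¹ * φ (y - x) ≤ f y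
  rw [map_sub]
  linarith

section Expanding
variable {c : ℝ}

lemma strictMono_of_expanding (hc : 0 < c) {g : ℝ → ℝ}
    (hexp : ∀ t s, t ≤ s → g t + c * (s - t) ≤ g s) : StrictMono g := fun t s hts =>
  (lt_add_of_pos_right _ (mul_pos hc (sub_pos.2 hts))).trans_le (hexp t s hts.le)

lemma exists_eq_zero_of_expanding (hc : 0 < c) {g : ℝ → ℝ} (hg : Continuous g)
    (hexp : ∀ t s, t ≤ s → g t + c * (s - t) ≤ g s) : ∃ t, g t = 0 := by
  set T := |g 0| / c
  have hT : c * T = |g 0| := mul_div_cancel₀ _ hc.ne'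
  have hT₀ : 0 ≤ T := by positivity
  have hlow : g (-T) ≤ 0 := by linarith [hexp (-T) 0 (by linarith), le_abs_self (g 0)]
  have hhigh : 0 ≤ g T := by linarith [hexp 0 T hT₀, neg_abs_le (g 0)]
  obtain ⟨t, -, ht⟩ := intermediate_value_Icc (neg_le_self hT₀) hg.continuousOn ⟨hlow, hhigh⟩
  exact ⟨t, ht⟩

theorem exists_lipschitzWith_eq_zero_of_expanding {E : Type*} [PseudoMetricSpace E] (hc : 0 < c)
    {g : E → ℝ → ℝ} {K : ℝ≥0} (hcont : ∀ x, Continuous (g x))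
    (hexp : ∀ x t s, t ≤ s → g x t + c * (s - t) ≤ g x s)
    (hlip : ∀ t, LipschitzWith K (g · t)) :
    ∃ h : E → ℝ, LipschitzWith (K / c).toNNReal h ∧ ∀ x, g x (h x) = 0 := by
  choose h hh using fun x => exists_eq_zero_of_expanding hc (hcont x) (hexp x)
  refine ⟨h, LipschitzWith.of_le_add_mul' _ fun x y => ?_, hh⟩
  have hK : 0 ≤ K / c * dist x y := by positivity
  rcases le_total (h x) (h y) with hxy | hyx
  · linarith
  · -- `g x` climbs at rate `c` from `h y` to its zero `h x`,
    -- while `g x (h y)` is `K`-close to `g y (h y) = 0`.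
    have hclimb := hexp x _ _ hyx
    have hclose := (hlip (h y)).dist_le_mul x y
    rw [hh x] at hclimb
    rw [Real.dist_eq, hh y, sub_zero] at hclose
    rw [div_mul_eq_mul_div, ← sub_le_iff_le_add', le_div_iff₀ hc]
    linarith [neg_abs_le (g x (h y))]

end Expanding

variable {n : ℕ}

@[simp] lemma snocPt_last (x' : EuclideanSpace ℝ (Fin n)) (t : ℝ) :
    snocPt x' t (Fin.last n) = t := by simp [snocPt]

@[simp] lemma snocPt_castSucc (x' : EuclideanSpace ℝ (Fin n)) (t : ℝ) (i : Fin n) :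
    snocPt x' t i.castSucc = x' i := by simp [snocPt]

@[simp] lemma projPt_snocPt (x' : EuclideanSpace ℝ (Fin n)) (t : ℝ) :
    projPt (snocPt x' t) = x' := by
  ext i; simp [projPt]

@[simp] lemma snocPt_projPt (x : EuclideanSpace ℝ (Fin (n + 1))) :
    snocPt (projPt x) (x (Fin.last n)) = x := by
  ext j
  induction j using Fin.lastCases <;> simp [projPt]

lemma snocPt_sub (x' y' : EuclideanSpace ℝ (Fin n)) (s t : ℝ) :
    snocPt x' s - snocPt y' t = snocPt (x' - y') (s - t) := by
  ext j
  induction j using Fin.lastCases <;> simp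

lemma norm_snocPt_zero (x' : EuclideanSpace ℝ (Fin n)) : ‖snocPt x' 0‖ = ‖x'‖ := by
  simp [EuclideanSpace.norm_eq, Fin.sum_univ_castSucc]

lemma inner_snocPt_zero (p : EuclideanSpace ℝ (Fin (n + 1))) (t : ℝ) :
    inner ℝ p (snocPt (0 : EuclideanSpace ℝ (Fin n)) t) = p (Fin.last n) * t := by
  simp [PiLp.inner_apply, Fin.sum_univ_castSucc, mul_comm]

lemma isometry_snocPt_left (t : ℝ) : Isometry fun x' : EuclideanSpace ℝ (Fin n) => snocPt x' t :=
  Isometry.of_dist_eq fun x' y' => by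
    rw [dist_eq_norm, dist_eq_norm, snocPt_sub, sub_self, norm_snocPt_zero]

@[fun_prop]
lemma Continuous.snocPt {X : Type*} [TopologicalSpace X] {f : X → EuclideanSpace ℝ (Fin n)}
    {g : X → ℝ} (hf : Continuous f) (hg : Continuous g) :
    Continuous fun a => snocPt (f a) (g a) :=
  (EuclideanSpace.equiv (Fin (n + 1)) ℝ).symm.continuous.comp
    (((EuclideanSpace.equiv (Fin n) ℝ).continuous.comp hf).finSnoc hg)

lemma ConvexOn.subdiff_nonempty {f : EuclideanSpace ℝ (Fin n) → ℝ} (hf : ConvexOn ℝ univ f)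
    (x : EuclideanSpace ℝ (Fin n)) : (subdiff f x).Nonempty := by
  obtain ⟨l, hl⟩ := hf.exists_subgradient (continuousOn_univ.mp (hf.continuousOn isOpen_univ)) x
  exact ⟨(InnerProductSpace.toDual ℝ _).symm l, fun y => by simpa using hl y⟩

lemma ConvexOn.exists_lipschitzWith_of_subdiff_subset {f : EuclideanSpace ℝ (Fin n) → ℝ}
    (hf : ConvexOn ℝ univ f) {Ω : Set (EuclideanSpace ℝ (Fin n))} (hΩ : Bornology.IsBounded Ω)
    (hsub : ∀ x, subdiff f x ⊆ Ω) : ∃ K, LipschitzWith K f := by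
  obtain ⟨R, hR⟩ := hΩ.exists_norm_le
  refine ⟨_, LipschitzWith.of_le_add_mul' R fun x y => ?_⟩
  obtain ⟨p, hp⟩ := hf.subdiff_nonempty x
  have hinner : -inner ℝ p (y - x) ≤ R * dist x y := by
    rw [dist_comm, dist_eq_norm]
    exact (neg_le_abs _).trans ((abs_real_inner_le_norm _ _).trans
      (mul_le_mul_of_nonneg_right (hR p (hsub x hp)) (norm_nonneg _)))
  linarith [hp y]

lemma add_mul_le_of_mem_subdiff_snocPt {f : EuclideanSpace ℝ (Fin (n + 1)) → ℝ}
    {x' : EuclideanSpace ℝ (Fin n)} {t : ℝ} {p : EuclideanSpace ℝ (Fin (n + 1))}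
    (hp : p ∈ subdiff f (snocPt x' t)) (s : ℝ) :
    f (snocPt x' t) + p (Fin.last n) * (s - t) ≤ f (snocPt x' s) := by
  simpa [snocPt_sub, inner_snocPt_zero] using hp (snocPt x' s)

section
variable {f : EuclideanSpace ℝ (Fin (n + 1)) → ℝ}

lemma ConvexOn.add_mul_le_of_le_subdiff_last (hf : ConvexOn ℝ univ f) {α : ℝ}
    (hα : ∀ x, ∀ p ∈ subdiff f x, α ≤ p (Fin.last n)) (x' : EuclideanSpace ℝ (Fin n))
    {t s : ℝ} (hts : t ≤ s) : f (snocPt x' t) + α * (s - t) ≤ f (snocPt x' s) := by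
  obtain ⟨p, hp⟩ := hf.subdiff_nonempty (snocPt x' t)
  have := mul_le_mul_of_nonneg_right (hα _ p hp) (sub_nonneg.2 hts)
  linarith [add_mul_le_of_mem_subdiff_snocPt hp s]

lemma ConvexOn.le_add_mul_of_subdiff_last_le (hf : ConvexOn ℝ univ f) {β : ℝ}
    (hβ : ∀ x, ∀ p ∈ subdiff f x, p (Fin.last n) ≤ β) (x' : EuclideanSpace ℝ (Fin n))
    {t s : ℝ} (hts : t ≤ s) : f (snocPt x' s) ≤ f (snocPt x' t) + β * (s - t) := by
  obtain ⟨p, hp⟩ := hf.subdiff_nonempty (snocPt x' s)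
  have := mul_le_mul_of_nonneg_right (hβ _ p hp) (sub_nonneg.2 hts)
  linarith [add_mul_le_of_mem_subdiff_snocPt hp t]

end

lemma isConnected_setOf_last_sub_mem {h : EuclideanSpace ℝ (Fin n) → ℝ} (hh : Continuous h)
    {S : Set ℝ} (hS : IsConnected S) :
    IsConnected {x : EuclideanSpace ℝ (Fin (n + 1)) | x (Fin.last n) - h (projPt x) ∈ S} := by
  have hset : {x : EuclideanSpace ℝ (Fin (n + 1)) | x (Fin.last n) - h (projPt x) ∈ S} =
      (fun q : EuclideanSpace ℝ (Fin n) × ℝ => snocPt q.1 (h q.1 + q.2)) '' (univ ×ˢ S) := by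
    ext x
    constructor
    · intro hx
      exact ⟨(projPt x, x (Fin.last n) - h (projPt x)), ⟨trivial, hx⟩, by simp⟩
    · rintro ⟨⟨x', s⟩, ⟨-, hs⟩, rfl⟩
      simpa using hs
  rw [hset]
  exact (isConnected_univ.prod hS).image _ (by fun_prop)

/-- Hyperplane-separated subdifferential images induce connected tears: if `u = max{u₁,u₂}`
with the subdifferential images of `u₁`, `u₂` strongly separated by the (coordinate)
hyperplane `{xⁿ = a}` (that of `u₂` below, that of `u₁` above), then `{u₁ = u₂}` is the
graph of a globally Lipschitz function `h` over the hyperplane, `{u₁ > u₂}` its open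
epigraph and `{u₁ < u₂}` its open subgraph, and all three sets are connected. -/
theorem separated_targets_connected_tears (n : ℕ)
    (u₁ u₂ : EuclideanSpace ℝ (Fin (n + 1)) → ℝ)
    (Ω₁ Ω₂ : Set (EuclideanSpace ℝ (Fin (n + 1))))
    (hu₁ : ConvexOn ℝ univ u₁) (hu₂ : ConvexOn ℝ univ u₂)
    (hΩ₁ : IsCompact Ω₁) (hΩ₂ : IsCompact Ω₂)
    (hsub₁ : ∀ x, subdiff u₁ x ⊆ Ω₁) (hsub₂ : ∀ x, subdiff u₂ x ⊆ Ω₂)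
    (a d : ℝ) (hd : 0 < d)
    (hsep₂ : ∀ p ∈ Ω₂, p (Fin.last n) < a - d)
    (hsep₁ : ∀ p ∈ Ω₁, a + d < p (Fin.last n)) :
    ∃ h : EuclideanSpace ℝ (Fin n) → ℝ, (∃ C : NNReal, LipschitzWith C h) ∧
      {x | u₁ x = u₂ x} = {x | x (Fin.last n) = h (projPt x)} ∧
      {x | u₂ x < u₁ x} = {x | h (projPt x) < x (Fin.last n)} ∧
      {x | u₁ x < u₂ x} = {x | x (Fin.last n) < h (projPt x)} ∧
      IsConnected {x | u₁ x = u₂ x} ∧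
      IsConnected {x | u₂ x < u₁ x} ∧
      IsConnected {x | u₁ x < u₂ x} := by
  obtain ⟨K₁, hK₁⟩ := hu₁.exists_lipschitzWith_of_subdiff_subset hΩ₁.isBounded hsub₁
  obtain ⟨K₂, hK₂⟩ := hu₂.exists_lipschitzWith_of_subdiff_subset hΩ₂.isBounded hsub₂
  have hw : LipschitzWith (K₁ + K₂) fun x => u₁ x - u₂ x := hK₁.sub hK₂
  set g : EuclideanSpace ℝ (Fin n) → ℝ → ℝ := fun x' t => u₁ (snocPt x' t) - u₂ (snocPt x' t)
  have hexp : ∀ x' t s, t ≤ s → g x' t + 2 * d * (s - t) ≤ g x' s := fun x' t s hts => by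
    have h₁ := hu₁.add_mul_le_of_le_subdiff_last (fun x p hp => (hsep₁ p (hsub₁ x hp)).le) x' hts
    have h₂ := hu₂.le_add_mul_of_subdiff_last_le (fun x p hp => (hsep₂ p (hsub₂ x hp)).le) x' hts
    simp only [g]
    linarith
  have h2d : 0 < 2 * d := by positivity
  obtain ⟨h, hh, hzero⟩ := exists_lipschitzWith_eq_zero_of_expanding (g := g) h2d
    (fun x' => hw.continuous.comp (continuous_const.snocPt continuous_id)) hexp
    (fun t => mul_one (K₁ + K₂) ▸ hw.comp (isometry_snocPt_left t).lipschitz)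
  have hmono := fun x' => strictMono_of_expanding h2d (hexp x')
  have hg : ∀ x, u₁ x - u₂ x = g (projPt x) (x (Fin.last n)) := fun x => by simp [g]
  have htear : {x | u₁ x = u₂ x} = {x | x (Fin.last n) = h (projPt x)} := by
    ext x
    rw [mem_ofPred, ← sub_eq_zero, hg, ← hzero (projPt x), (hmono _).injective.eq_iff]
    rfl
  have hpos : {x | u₂ x < u₁ x} = {x | h (projPt x) < x (Fin.last n)} := by
    ext x
    rw [mem_ofPred, ← sub_pos, hg, ← hzero (projPt x), (hmono _).lt_iff_lt]
    rfl
  have hneg : {x | u₁ x < u₂ x} = {x | x (Fin.last n) < h (projPt x)} := by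
    ext x
    rw [mem_ofPred, ← sub_neg, hg, ← hzero (projPt x), (hmono _).lt_iff_lt]
    rfl
  refine ⟨h, ⟨_, hh⟩, htear, hpos, hneg, ?_, ?_, ?_⟩
  · simpa [htear, sub_eq_zero] using
      isConnected_setOf_last_sub_mem hh.continuous (isConnected_singleton (x := 0))
  · simpa [hpos] using isConnected_setOf_last_sub_mem hh.continuous (isConnected_Ioi (a := 0))
  · simpa [hneg] using isConnected_setOf_last_sub_mem hh.continuous (isConnected_Iio (a := 0))
end
end

section
/- Let u = max_{i∈I} u_i with u_i convex on ℝⁿ, the sets {Ω̄_i} finite, disjoint, compact, with ∇u_i valued in Ω̄_i. Fix indices 1,...,k and suppose for every j ∉ {1,...,k}: whenever ∂u(x) meets Ω̄_1,...,Ω̄_k and Ω̄_j simultaneously, the collection {ch(Ω̄_1),...,ch(Ω̄_k), ch(Ω̄_j)} is affinely independent. Then the set Σ↑_{1..k} ∩ M_k of points where u = u_1 = ⋯ = u_k and the multiplicity is exactly k equals {x : u(x) = u_1(x) = ⋯ = u_k(x) > max_{j>k} u_j(x)}, and this set is relatively open in Σ↑_{1..k} := {x : u(x) = u_i(x), i =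 1..k}. -/
open Set

noncomputable section

/-- The multiplicity of `u` at `x` relative to the collection `Ω`: the number of indices `i`
with `∂u(x) ∩ Ω i ≠ ∅`. -/
def mult {n K : ℕ} (u : EuclideanSpace ℝ (Fin n) → ℝ)
    (Ω : Fin K → Set (EuclideanSpace ℝ (Fin n))) (x : EuclideanSpace ℝ (Fin n)) : ℕ :=
  Set.ncard {i : Fin K | (subdiff u x ∩ Ω i).Nonempty}

/-! A subgradient of `u` at `x` lies in `Ω̄ᵢ` for every index `i` active at `x` (a limit of
gradients of `uᵢ` at nearby points of differentiability, which are dense by Rademacher's theorem),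
and lies in the convex hull of the `Ω̄ᵢ` over the active indices (otherwise a separating direction
`v` and the monotonicity of `∂u` along `x + t v` contradict each other). On the tear, the first
fact turns multiplicity `k` into `uⱼ < u` for `j > k`. Conversely, if `uⱼ < u` for `j > k`, a
subgradient in `Ω̄ⱼ` would be a convex combination of points of `ch(Ω̄₁), …, ch(Ω̄ₖ)`, against
affine independence. The strict inequalities are open conditions, which gives the openness. -/

open Filter Topology MeasureTheory

section NormedSpace

variable {E : Type*} [NormedAddCommGroup E] [NormedSpace ℝ E]

theorem ConvexOn.add_fderiv_sub_le {f : E → ℝ} (hf : ConvexOn ℝ univ f) {x : E}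
    (hd : DifferentiableAt ℝ f x) (z : E) : f x + fderiv ℝ f x (z - x) ≤ f z := by
  have hline : ConvexOn ℝ univ (f ∘ AffineMap.lineMap (k := ℝ) x z) := by
    simpa using hf.comp_affineMap (AffineMap.lineMap (k := ℝ) x z)
  have hderiv : HasDerivAt (f ∘ AffineMap.lineMap (k := ℝ) x z) (fderiv ℝ f x (z - x)) 0 := by
    refine HasFDerivAt.comp_hasDerivAt (0 : ℝ) ?_ AffineMap.hasDerivAt_lineMap
    simpa using hd.hasFDerivAt
  have := hline.le_slope_of_hasDerivAt (mem_univ 0) (mem_univ 1) zero_lt_one hderiv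
  simp only [slope_def_field, Function.comp_apply, AffineMap.lineMap_apply_zero,
    AffineMap.lineMap_apply_one, sub_zero, div_one] at this
  linarith

variable [FiniteDimensional ℝ E]

theorem LocallyLipschitz.ae_differentiableAt [MeasurableSpace E] [BorelSpace E] {F : Type*}
    [NormedAddCommGroup F] [NormedSpace ℝ F] [FiniteDimensional ℝ F] {f : E → F}
    (hf : LocallyLipschitz f) (μ : Measure E) [μ.IsAddHaarMeasure] :
    ∀ᵐ x ∂μ, DifferentiableAt ℝ f x := by
  rw [ae_iff]
  refine measure_null_of_locally_null _ fun x _ => ?_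
  obtain ⟨K, t, ht, hK⟩ := hf x
  refine ⟨{y | ¬DifferentiableAt ℝ f y} ∩ interior t,
    inter_mem_nhdsWithin _ (interior_mem_nhds.2 ht), ?_⟩
  refine measure_mono_null ?_
    (ae_iff.1 (hK.mono interior_subset).ae_differentiableWithinAt_of_mem)
  rintro y ⟨hnd, hy⟩ hdiff
  exact hnd ((hdiff hy).differentiableAt (isOpen_interior.mem_nhds hy))

theorem dense_setOf_forall_differentiableAt {ι : Type*} [Countable ι] {f : ι → E → ℝ}
    (hf : ∀ i, LocallyLipschitz (f i)) : Dense {x | ∀ i, DifferentiableAt ℝ (f i) x} := by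
  borelize E
  exact Measure.addHaar.dense_of_ae (ae_all_iff.2 fun i => (hf i).ae_differentiableAt _)

theorem IsCompact.convexHull {s : Set E} (hs : IsCompact s) : IsCompact (convexHull ℝ s) := by
  let F (m : ℕ) (wz : (Fin m → ℝ) × (Fin m → E)) : E := ∑ j, wz.1 j • wz.2 j
  -- Carathéodory: affinely independent families have at most `finrank ℝ E + 1` points.
  have hcarath : _root_.convexHull ℝ s = ⋃ m ∈ Finset.range (Module.finrank ℝ E + 2),
      F m '' (stdSimplex ℝ (Fin m) ×ˢ univ.pi fun _ => s) := by
    refine Subset.antisymm (fun q hq => ?_) (iUnion₂_subset fun m _ => ?_)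
    · obtain ⟨ι, _, z, w, hzs, hz, hw, hw1, rfl⟩ := eq_pos_convex_span_of_mem_convexHull hq
      have hcard : Fintype.card ι < Module.finrank ℝ E + 2 :=
        Nat.lt_succ_of_le (hz.card_le_finrank_succ.trans
          (Nat.succ_le_succ (Submodule.finrank_le _)))
      let e := Fintype.equivFin ι
      refine mem_biUnion (Finset.mem_range.2 hcard) ⟨(w ∘ e.symm, z ∘ e.symm),
        ⟨⟨fun j => (hw _).le, ?_⟩, fun j _ => hzs (mem_range_self _)⟩, ?_⟩
      · simpa using (e.symm.sum_comp w).trans hw1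
      · exact e.symm.sum_comp fun i => w i • z i
    · rintro _ ⟨⟨w, z⟩, ⟨hw, hz⟩, rfl⟩
      exact (convex_convexHull ℝ s).sum_mem (fun j _ => hw.1 j) hw.2
        (fun j _ => subset_convexHull ℝ s (hz j trivial))
  rw [hcarath]
  exact (Finset.range _).isCompact_biUnion fun m _ =>
    ((isCompact_stdSimplex ℝ _).prod (isCompact_univ_pi fun _ => hs)).image (by fun_prop)

end NormedSpace

section ConvexHull

variable {E ι : Type*} [AddCommGroup E] [Module ℝ E]

theorem exists_mem_convexHull_image_of_mem_convexHull_biUnion [DecidableEq ι] {A : ι → Set E}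
    {s : Finset ι} (hA : ∀ i ∈ s, (A i).Nonempty) {q : E}
    (hq : q ∈ convexHull ℝ (⋃ i ∈ s, A i)) :
    ∃ r : ι → E, (∀ i ∈ s, r i ∈ convexHull ℝ (A i)) ∧ q ∈ convexHull ℝ (r '' s) := by
  induction s using Finset.induction_on generalizing q with
  | empty => simp at hq
  | insert a s ha ih =>
    rw [Finset.set_biUnion_insert] at hq
    rcases s.eq_empty_or_nonempty with rfl | hs
    · exact ⟨fun _ => q, by simpa using hq, by simp⟩
    have hU : (⋃ i ∈ s, A i).Nonempty := by
      obtain ⟨i, hi⟩ := hs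
      exact (hA i (Finset.mem_insert_of_mem hi)).mono (subset_biUnion_of_mem (u := A) hi)
    obtain ⟨x, hx, y, hy, hqxy⟩ :=
      mem_convexJoin.1 ((convexHull_union (hA a (s.mem_insert_self a)) hU).subset hq)
    obtain ⟨r, hr, hyr⟩ := ih (fun i hi => hA i (Finset.mem_insert_of_mem hi)) hy
    have himage : Function.update r a x '' ↑(insert a s) = insert x (r '' s) := by
      rw [Finset.coe_insert, image_insert_eq, Function.update_self]
      congr 1
      exact image_congr fun i hi => Function.update_of_ne (ne_of_mem_of_not_mem hi ha) _ _
    refine ⟨Function.update r a x, fun i hi => ?_, ?_⟩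
    · rcases Finset.mem_insert.1 hi with rfl | hi
      · simpa using hx
      · simpa [Function.update_of_ne (ne_of_mem_of_not_mem hi ha)] using hr i hi
    · rw [himage]
      exact (convex_convexHull ℝ _).segment_subset (subset_convexHull ℝ _ (mem_insert x _))
        (convexHull_mono (subset_insert x _) hyr) hqxy

theorem exists_mem_convexHull_range_of_mem_convexHull_iUnion [Fintype ι] {A : ι → Set E}
    (hA : ∀ i, (A i).Nonempty) {q : E} (hq : q ∈ convexHull ℝ (⋃ i, A i)) :
    ∃ r : ι → E, (∀ i, r i ∈ convexHull ℝ (A i)) ∧ q ∈ convexHull ℝ (range r) := by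
  classical
  simpa using exists_mem_convexHull_image_of_mem_convexHull_biUnion (s := Finset.univ)
    (fun i _ => hA i) (by simpa using hq)

theorem not_affineIndependent_snoc_of_mem_convexHull {k : ℕ} {r : Fin k → E} {q : E}
    (hq : q ∈ convexHull ℝ (range r)) :
    ¬AffineIndependent ℝ (Fin.snoc r q : Fin (k + 1) → E) := by
  intro h
  have hspan : (Fin.snoc r q : Fin (k + 1) → E) (Fin.last k) ∈
      affineSpan ℝ ((Fin.snoc r q : Fin (k + 1) → E) '' range Fin.castSucc) := by
    rw [← range_comp, Fin.snoc_comp_castSucc, Fin.snoc_last]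
    exact convexHull_subset_affineSpan _ hq
  obtain ⟨i, hi⟩ := (h.mem_affineSpan_iff _ _).1 hspan
  exact Fin.castSucc_ne_last i hi

end ConvexHull

section Topology

variable {X ι : Type*} [Finite ι]

theorem isClosed_setOf_exists_mem_of_isCompact [TopologicalSpace X] {Y : Type*}
    [TopologicalSpace Y] {K : Set Y} (hK : IsCompact K) {P : Set (X × Y)} (hP : IsClosed P) :
    IsClosed {x | ∃ y ∈ K, (x, y) ∈ P} := by
  have := isCompact_iff_compactSpace.1 hK
  have hfst : {x | ∃ y ∈ K, (x, y) ∈ P} = Prod.fst '' {p : X × K | (p.1, (p.2 : Y)) ∈ P} := by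
    ext x; simp
  rw [hfst]
  exact isClosedMap_fst_of_compactSpace _ (hP.preimage (by fun_prop))

theorem le_of_forall_eq_ciSup {f : ι → X → ℝ} {g : X → ℝ} (hg : ∀ x, g x = ⨆ i, f i x) (i : ι)
    (x : X) : f i x ≤ g x :=
  (hg x).symm ▸ le_ciSup (f := fun i => f i x) (finite_range _).bddAbove i

theorem continuous_of_forall_eq_ciSup [TopologicalSpace X] [Nonempty ι] {f : ι → X → ℝ}
    {g : X → ℝ} (hf : ∀ i, Continuous (f i)) (hg : ∀ x, g x = ⨆ i, f i x) : Continuous g := by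
  have := Fintype.ofFinite ι
  rw [funext hg]
  simpa only [Finset.sup'_univ_eq_ciSup] using
    Continuous.finset_sup'_apply Finset.univ_nonempty fun i _ => hf i

theorem isOpen_setOf_forall_imp_lt [TopologicalSpace X] {P : ι → Prop} {f : ι → X → ℝ}
    {g : X → ℝ} (hf : ∀ i, Continuous (f i)) (hg : Continuous g) :
    IsOpen {x | ∀ i, P i → f i x < g x} := by
  simp only [ofPred_forall]
  refine isOpen_iInter_of_finite fun i => ?_
  by_cases hP : P i <;> simp [hP, isOpen_lt (hf i) hg]

end Topology

section Subdifferential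

variable {n : ℕ}

theorem mem_subdiff_of_le {f g : EuclideanSpace ℝ (Fin n) → ℝ} (hle : ∀ z, g z ≤ f z)
    {x p : EuclideanSpace ℝ (Fin n)} (hx : g x = f x) (hp : p ∈ subdiff g x) :
    p ∈ subdiff f x :=
  fun z => hx ▸ (hp z).trans (hle z)

theorem inner_sub_nonneg_of_mem_subdiff {f : EuclideanSpace ℝ (Fin n) → ℝ}
    {x y p q : EuclideanSpace ℝ (Fin n)} (hp : p ∈ subdiff f x) (hq : q ∈ subdiff f y) :
    0 ≤ inner ℝ (q - p) (y - x) := by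
  have hpy := hp y
  have hqx := hq x
  rw [← neg_sub y x, inner_neg_right] at hqx
  rw [inner_sub_left]
  linarith

theorem ConvexOn.gradient_mem_subdiff {f : EuclideanSpace ℝ (Fin n) → ℝ}
    (hf : ConvexOn ℝ univ f) {x : EuclideanSpace ℝ (Fin n)} (hd : DifferentiableAt ℝ f x) :
    gradient f x ∈ subdiff f x := fun z => by
  simpa [gradient, InnerProductSpace.toDual_symm_apply] using hf.add_fderiv_sub_le hd z

theorem isClosed_setOf_subdiff_inter_nonempty {f : EuclideanSpace ℝ (Fin n) → ℝ}
    (hf : Continuous f) {C : Set (EuclideanSpace ℝ (Fin n))} (hC : IsCompact C) :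
    IsClosed {x | (subdiff f x ∩ C).Nonempty} := by
  have hgraph : IsClosed {xp : EuclideanSpace ℝ (Fin n) × EuclideanSpace ℝ (Fin n) |
      ∀ z, f xp.1 + inner ℝ xp.2 (z - xp.1) ≤ f z} := by
    simp only [ofPred_forall]
    exact isClosed_iInter fun z => isClosed_le (by fun_prop) (by fun_prop)
  simpa only [Set.Nonempty, mem_inter_iff, and_comm, subdiff, mem_ofPred_eq] using
    isClosed_setOf_exists_mem_of_isCompact hC hgraph

theorem subdiff_inter_nonempty_of_dense {f : EuclideanSpace ℝ (Fin n) → ℝ} (hf : Continuous f)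
    {C U D : Set (EuclideanSpace ℝ (Fin n))} (hC : IsCompact C) (hU : IsOpen U) (hD : Dense D)
    (h : ∀ y ∈ U ∩ D, (subdiff f y ∩ C).Nonempty) {x : EuclideanSpace ℝ (Fin n)} (hx : x ∈ U) :
    (subdiff f x ∩ C).Nonempty :=
  closure_minimal h (isClosed_setOf_subdiff_inter_nonempty hf hC)
    (hD.open_subset_closure_inter hU hx)

theorem ConvexOn.subdiff_inter_nonempty {f : EuclideanSpace ℝ (Fin n) → ℝ}
    (hf : ConvexOn ℝ univ f) {Ω : Set (EuclideanSpace ℝ (Fin n))} (hΩ : IsCompact Ω)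
    (hgrad : ∀ y, DifferentiableAt ℝ f y → gradient f y ∈ Ω) (x : EuclideanSpace ℝ (Fin n)) :
    (subdiff f x ∩ Ω).Nonempty :=
  subdiff_inter_nonempty_of_dense hf.locallyLipschitz.continuous hΩ isOpen_univ
    (dense_setOf_forall_differentiableAt fun _ : Unit => hf.locallyLipschitz)
    (fun y ⟨_, hy⟩ => ⟨gradient f y, hf.gradient_mem_subdiff (hy ()), hgrad y (hy ())⟩)
    (mem_univ x)

theorem subdiff_inter_nonempty_of_le {f u : EuclideanSpace ℝ (Fin n) → ℝ}
    (hf : ConvexOn ℝ univ f) {Ω : Set (EuclideanSpace ℝ (Fin n))} (hΩ : IsCompact Ω)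
    (hgrad : ∀ y, DifferentiableAt ℝ f y → gradient f y ∈ Ω) (hle : ∀ z, f z ≤ u z)
    {x : EuclideanSpace ℝ (Fin n)} (hx : f x = u x) : (subdiff u x ∩ Ω).Nonempty :=
  let ⟨q, hq, hqΩ⟩ := hf.subdiff_inter_nonempty hΩ hgrad x
  ⟨q, mem_subdiff_of_le hle hx hq, hqΩ⟩

end Subdifferential

section MaxOfConvex

variable {n : ℕ} {ι : Type*} [Finite ι] {uu : ι → EuclideanSpace ℝ (Fin n) → ℝ}
  {Ω : ι → Set (EuclideanSpace ℝ (Fin n))} {u : EuclideanSpace ℝ (Fin n) → ℝ}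

theorem mem_convexHull_of_mem_subdiff_iSup [Nonempty ι] (hconv : ∀ i, ConvexOn ℝ univ (uu i))
    (hcomp : ∀ i, IsCompact (Ω i))
    (hgrad : ∀ i y, DifferentiableAt ℝ (uu i) y → gradient (uu i) y ∈ Ω i)
    (hu : ∀ x, u x = ⨆ i, uu i x) {S : Set ι} {x p : EuclideanSpace ℝ (Fin n)}
    (hS : ∀ j, j ∉ S → uu j x < u x) (hp : p ∈ subdiff u x) :
    p ∈ convexHull ℝ (⋃ i ∈ S, Ω i) := by
  have hcont i : Continuous (uu i) := (hconv i).locallyLipschitz.continuous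
  have hu_cont : Continuous u := continuous_of_forall_eq_ciSup hcont hu
  have hU : IsCompact (⋃ i ∈ S, Ω i) := S.toFinite.isCompact_biUnion fun i _ => hcomp i
  by_contra hpC
  obtain ⟨l, c, hlC, hcp⟩ :=
    geometric_hahn_banach_closed_point (convex_convexHull ℝ _) hU.convexHull.isClosed hpC
  set W := {y | ∀ j, j ∉ S → uu j y < u y}
  have hWo : IsOpen W := isOpen_setOf_forall_imp_lt hcont hu_cont
  have hsubdiff : ∀ y ∈ W, (subdiff u y ∩ ⋃ i ∈ S, Ω i).Nonempty := by
    refine fun y hy => subdiff_inter_nonempty_of_dense hu_cont hU hWo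
      (dense_setOf_forall_differentiableAt fun i => (hconv i).locallyLipschitz) ?_ hy
    rintro y ⟨hyW, hyd⟩
    obtain ⟨i, hi⟩ := exists_eq_ciSup_of_finite (f := fun i => uu i y)
    rw [← hu y] at hi
    have hiS : i ∈ S := by_contra fun hiS => (hyW i hiS).ne hi
    exact ⟨gradient (uu i) y, mem_subdiff_of_le (le_of_forall_eq_ciSup hu i) hi
      ((hconv i).gradient_mem_subdiff (hyd i)), mem_biUnion hiS (hgrad i y (hyd i))⟩
  -- Move from `x` in the direction `v` dual to `l`: monotonicity of `∂u` gives `l p ≤ l g`.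
  set v := (InnerProductSpace.toDual ℝ (EuclideanSpace ℝ (Fin n))).symm l
  have hline : ∀ᶠ t in 𝓝[>] (0 : ℝ), x + t • v ∈ W :=
    (((continuous_const.add (continuous_id.smul continuous_const)).tendsto' 0 x
      (by simp)).eventually (hWo.mem_nhds hS)).filter_mono nhdsWithin_le_nhds
  obtain ⟨t, htW, ht⟩ := (hline.and self_mem_nhdsWithin).exists
  obtain ⟨g, hg, hgU⟩ := hsubdiff _ htW
  have hmono := inner_sub_nonneg_of_mem_subdiff hp hg
  rw [add_sub_cancel_left, inner_smul_right, real_inner_comm,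
    InnerProductSpace.toDual_symm_apply, map_sub] at hmono
  have hlg := hlC g (subset_convexHull ℝ _ hgU)
  nlinarith [show (0 : ℝ) < t from ht]

variable {k : ℕ} {e : Fin k → ι} {x : EuclideanSpace ℝ (Fin n)}

theorem lt_of_ncard_setOf_subdiff_inter_nonempty_le (hconv : ∀ i, ConvexOn ℝ univ (uu i))
    (hcomp : ∀ i, IsCompact (Ω i))
    (hgrad : ∀ i y, DifferentiableAt ℝ (uu i) y → gradient (uu i) y ∈ Ω i)
    (hu : ∀ x, u x = ⨆ i, uu i x) (he : Function.Injective e) (hx : ∀ i, u x = uu (e i) x)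
    (hmult : {i | (subdiff u x ∩ Ω i).Nonempty}.ncard ≤ k) {j : ι} (hj : j ∉ range e) :
    uu j x < u x := by
  refine (le_of_forall_eq_ciSup hu j x).lt_of_ne fun hjx => ?_
  have hsub : insert j (range e) ⊆ {i | (subdiff u x ∩ Ω i).Nonempty} := by
    rintro _ (rfl | ⟨i, rfl⟩)
    · exact subdiff_inter_nonempty_of_le (hconv _) (hcomp _) (hgrad _)
        (le_of_forall_eq_ciSup hu _) hjx
    · exact subdiff_inter_nonempty_of_le (hconv _) (hcomp _) (hgrad _)
        (le_of_forall_eq_ciSup hu _) (hx i).symm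
  have := ncard_le_ncard hsub (toFinite _)
  rw [ncard_insert_of_notMem hj, ncard_range_of_injective he, Nat.card_eq_fintype_card,
    Fintype.card_fin] at this
  omega

theorem setOf_subdiff_inter_nonempty_eq_range [Nonempty ι]
    (hconv : ∀ i, ConvexOn ℝ univ (uu i)) (hcomp : ∀ i, IsCompact (Ω i))
    (hgrad : ∀ i y, DifferentiableAt ℝ (uu i) y → gradient (uu i) y ∈ Ω i)
    (hu : ∀ x, u x = ⨆ i, uu i x) (hx : ∀ i, u x = uu (e i) x)
    (hS : ∀ j, j ∉ range e → uu j x < u x)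
    (hai : ∀ j, j ∉ range e → (∀ i, (subdiff u x ∩ Ω (e i)).Nonempty) →
      (subdiff u x ∩ Ω j).Nonempty → ∀ p : Fin (k + 1) → EuclideanSpace ℝ (Fin n),
        (∀ i, p i.castSucc ∈ convexHull ℝ (Ω (e i))) → p (Fin.last k) ∈ convexHull ℝ (Ω j) →
          AffineIndependent ℝ p) :
    {i | (subdiff u x ∩ Ω i).Nonempty} = range e := by
  have hactive i : (subdiff u x ∩ Ω (e i)).Nonempty :=
    subdiff_inter_nonempty_of_le (hconv _) (hcomp _) (hgrad _) (le_of_forall_eq_ciSup hu _)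
      (hx i).symm
  refine Subset.antisymm (fun j hj => ?_) (range_subset_iff.2 hactive)
  by_contra hje
  obtain ⟨q, hq, hqΩ⟩ := hj
  have hqhull : q ∈ convexHull ℝ (⋃ i, Ω (e i)) := by
    simpa [biUnion_range] using mem_convexHull_of_mem_subdiff_iSup hconv hcomp hgrad hu hS hq
  obtain ⟨r, hr, hqr⟩ := exists_mem_convexHull_range_of_mem_convexHull_iUnion
    (fun i => (hactive i).mono inter_subset_right) hqhull
  exact not_affineIndependent_snoc_of_mem_convexHull hqr (hai j hje hactive ⟨q, hq, hqΩ⟩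
    (Fin.snoc r q) (by simpa using hr) (by simpa using subset_convexHull ℝ _ hqΩ))

end MaxOfConvex

theorem multiplicity_k_tear_general (n K k : ℕ) (hkK : k ≤ K) (hk : 1 ≤ k)
    (uu : Fin K → EuclideanSpace ℝ (Fin n) → ℝ)
    (Ω : Fin K → Set (EuclideanSpace ℝ (Fin n)))
    (hconv : ∀ i, ConvexOn ℝ univ (uu i))
    (hcomp : ∀ i, IsCompact (Ω i))
    (hgrad : ∀ i x, DifferentiableAt ℝ (uu i) x → gradient (uu i) x ∈ Ω i)
    (u : EuclideanSpace ℝ (Fin n) → ℝ) (hu : ∀ x, u x = ⨆ i, uu i x)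
    (hai : ∀ j : Fin K, k ≤ j.1 → ∀ x : EuclideanSpace ℝ (Fin n),
      (∀ i : Fin k, (subdiff u x ∩ Ω (Fin.castLE hkK i)).Nonempty) →
      (subdiff u x ∩ Ω j).Nonempty →
      ∀ p : Fin (k + 1) → EuclideanSpace ℝ (Fin n),
        (∀ i : Fin k, p i.castSucc ∈ convexHull ℝ (Ω (Fin.castLE hkK i))) →
        p (Fin.last k) ∈ convexHull ℝ (Ω j) → AffineIndependent ℝ p) :
    ({x | ∀ i : Fin k, u x = uu (Fin.castLE hkK i) x} ∩ {x | mult u Ω x = k} =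
      {x | (∀ i : Fin k, u x = uu (Fin.castLE hkK i) x) ∧
        ∀ j : Fin K, k ≤ j.1 → uu j x < u x}) ∧
    ∀ x ∈ {x | ∀ i : Fin k, u x = uu (Fin.castLE hkK i) x} ∩ {x | mult u Ω x = k},
      ∃ ε > (0 : ℝ), ∀ y ∈ {x | ∀ i : Fin k, u x = uu (Fin.castLE hkK i) x},
        dist y x < ε → mult u Ω y = k := by
  have : Nonempty (Fin K) := ⟨Fin.castLE hkK ⟨0, hk⟩⟩
  have hinj := Fin.castLE_injective hkK
  have hrange (j : Fin K) : j ∉ range (Fin.castLE hkK) ↔ k ≤ j.1 := by simp [Fin.range_castLE]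
  have htear : {x | ∀ i : Fin k, u x = uu (Fin.castLE hkK i) x} ∩ {x | mult u Ω x = k} =
      {x | (∀ i : Fin k, u x = uu (Fin.castLE hkK i) x) ∧
        ∀ j : Fin K, k ≤ j.1 → uu j x < u x} := by
    ext x
    refine ⟨fun ⟨hx, hmult⟩ => ⟨hx, fun j hj => ?_⟩, fun ⟨hx, hS⟩ => ⟨hx, ?_⟩⟩
    · exact lt_of_ncard_setOf_subdiff_inter_nonempty_le hconv hcomp hgrad hu hinj hx hmult.le
        ((hrange j).2 hj)
    · rw [mem_ofPred_eq, mult, setOf_subdiff_inter_nonempty_eq_range hconv hcomp hgrad hu hx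
        (fun j hj => hS j ((hrange j).1 hj)) (fun j hj => hai j ((hrange j).1 hj) x),
        ncard_range_of_injective hinj, Nat.card_eq_fintype_card, Fintype.card_fin]
  refine ⟨htear, fun x hx => ?_⟩
  have hcont i : Continuous (uu i) := (hconv i).locallyLipschitz.continuous
  have hopen : IsOpen {x | ∀ j : Fin K, k ≤ j.1 → uu j x < u x} :=
    isOpen_setOf_forall_imp_lt hcont (continuous_of_forall_eq_ciSup hcont hu)
  obtain ⟨ε, hε, hball⟩ := Metric.isOpen_iff.1 hopen x (htear ▸ hx).2
  exact ⟨ε, hε, fun y hy hyx => (htear.symm.subset ⟨hy, hball hyx⟩).2⟩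

/-- Points of multiplicity exactly `k` in the tear `Σ↑_{1..k}`: under the additional affine
independence assumption, `Σ↑_{1..k} ∩ M_k` equals the set where `u = u₁ = ⋯ = u_k` while all
the remaining `uⱼ` are strictly smaller, and this set is relatively open in `Σ↑_{1..k}`. -/
theorem multiplicity_k_tear (n K k : ℕ) (hkK : k ≤ K) (hk : 1 ≤ k)
    (uu : Fin K → EuclideanSpace ℝ (Fin n) → ℝ)
    (Ω : Fin K → Set (EuclideanSpace ℝ (Fin n)))
    (hconv : ∀ i, ConvexOn ℝ univ (uu i))
    (hcomp : ∀ i, IsCompact (Ω i))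
    (hdisj : Pairwise (Function.onFun Disjoint Ω))
    (hgrad : ∀ i x, DifferentiableAt ℝ (uu i) x → gradient (uu i) x ∈ Ω i)
    (u : EuclideanSpace ℝ (Fin n) → ℝ) (hu : ∀ x, u x = ⨆ i, uu i x)
    (hai : ∀ j : Fin K, k ≤ j.1 → ∀ x : EuclideanSpace ℝ (Fin n),
      (∀ i : Fin k, (subdiff u x ∩ Ω (Fin.castLE hkK i)).Nonempty) →
      (subdiff u x ∩ Ω j).Nonempty →
      ∀ p : Fin (k + 1) → EuclideanSpace ℝ (Fin n),
        (∀ i : Fin k, p i.castSucc ∈ convexHull ℝ (Ω (Fin.castLE hkK i))) →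
        p (Fin.last k) ∈ convexHull ℝ (Ω j) → AffineIndependent ℝ p) :
    ({x | ∀ i : Fin k, u x = uu (Fin.castLE hkK i) x} ∩ {x | mult u Ω x = k} =
      {x | (∀ i : Fin k, u x = uu (Fin.castLE hkK i) x) ∧
        ∀ j : Fin K, k ≤ j.1 → uu j x < u x}) ∧
    ∀ x ∈ {x | ∀ i : Fin k, u x = uu (Fin.castLE hkK i) x} ∩ {x | mult u Ω x = k},
      ∃ ε > (0 : ℝ), ∀ y ∈ {x | ∀ i : Fin k, u x = uu (Fin.castLE hkK i) x},
        dist y x < ε → mult u Ω y = k :=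
  multiplicity_k_tear_general n K k hkK hk uu Ω hconv hcomp hgrad u hu hai
end
end
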